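/- arXiv:1604.01928 — 6 statements merged into one kernel-verified Lean document; each statement's English description precedes it below -/
import Mathlib

section
/- (Lemma 1, State-Variable Filter regression.) Let N ≥ 1, let u(t) = Σ_{i=1}^N A_i sin(ω_i t + φ_i) with A_i > 0, ω_i > 0 pairwise distinct and φ_i ∈ ℝ, and let θ ∈ ℝ^N be defined by ∏_{i=1}^N (X² + ω_i²) = X^{2N} + Σ_{j=1}^N θ_j X^{2(N−j)}. Let a_0,…,a_{2N−1} ∈ ℝ be such that every complex root of a(s) = s^{2N} + a_{2N−1} s^{2N−1} + … + a_1 s + a_0 has strictly negative real part. Suppose ξ : ℝ → ℝ^{2N} is differentiable on [0,∞) and satisfies the companion-form state-variable filter equations ξ_k'(t) = ξ_{k+1}(t) for k = 1,…,2N−1 and ξ_{2N}'(t) = −Σ_{k=1}^{2N} a_{k−1} ξ_k(t) + a_0 u(t) for all t ≥ 0. Define y(t) = Σ_{k=1}^{2N} a_{k−1} ξ_k(t) − a_0 u(t) and φ(t) ∈ ℝ^N by φ_j(t) = ξ_{2(N−j)+1}(t) for j = 1,…,N. Then there exist constants C ≥ 0 and λ > 0 such that |y(t) − φ(t)ᵀθ|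 ≤ C e^{−λ t} for all t ≥ 0. -/
/-
Write `D = d/dt`. Since `ξₖ = D^k ξ₀`, the first state solves `a(D) ξ₀ = a₀ u`, the output is
`y = -D^{2N} ξ₀`, and the regression error is `φᵀθ - y = P(D) ξ₀` with
`P = ∏ (X² + ωᵢ²) = X^{2N} + Σ θⱼ X^{2(N-1-j)}`. As `P(D)` kills every sinusoid of frequency `ωᵢ`,
`a(D) (P(D) ξ₀) = a₀ P(D) u = 0`: the error solves the homogeneous equation whose characteristic
polynomial `a` is Hurwitz. Factoring `a = ∏ (X - λ)` over `ℂ`, each first-order step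
`v' - λ v = r` with `Re λ < 0` passes exponential decay from `r` to `v` (variation of constants),
so the error decays exponentially.
-/

open Polynomial Real

def ExpDecay {E : Type*} [Norm E] (f : ℝ → E) : Prop :=
  ∃ C ≥ (0 : ℝ), ∃ μ > (0 : ℝ), ∀ t ≥ (0 : ℝ), ‖f t‖ ≤ C * exp (-μ * t)

theorem affine_mul_exp_le {c d κ T : ℝ} (hc : 0 ≤ c) (hd : 0 ≤ d) (hκ : 0 < κ) (hT : 0 ≤ T) :
    (c + d * T) * exp (-κ * T) ≤ (c + 2 * d / κ) * exp (-(κ / 2) * T) := by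
  set E := exp (-(κ / 2) * T)
  have hE : 0 < E := exp_pos _
  have hE1 : E ≤ 1 := exp_le_one_iff.2 (by nlinarith)
  have hxE : κ / 2 * T * E ≤ 1 :=
    calc κ / 2 * T * E ≤ exp (κ / 2 * T) * E :=
          mul_le_mul_of_nonneg_right ((le_add_of_nonneg_right zero_le_one).trans
            (add_one_le_exp _)) hE.le
      _ = 1 := by rw [← exp_add]; simp
  have hTE : T * E ≤ 2 / κ := by rw [le_div_iff₀ hκ]; linarith
  rw [show exp (-κ * T) = E * E by rw [← exp_add]; ring_nf, ← mul_assoc]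
  refine mul_le_mul_of_nonneg_right ?_ hE.le
  have := mul_le_mul_of_nonneg_left hTE hd
  have := mul_le_mul_of_nonneg_left hE1 hc
  have : 2 * d / κ = d * (2 / κ) := by ring
  linarith

theorem norm_le_of_hasDerivAt_sub_mul {v v' : ℝ → ℂ} {l : ℂ} {C μ κ : ℝ} (hC : 0 ≤ C)
    (hκμ : κ ≤ μ) (hκl : κ ≤ -l.re) (hv : ∀ t ≥ (0 : ℝ), HasDerivAt v (v' t) t)
    (hr : ∀ t ≥ (0 : ℝ), ‖v' t - l * v t‖ ≤ C * exp (-μ * t)) {T : ℝ} (hT : 0 ≤ T) :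
    ‖v T‖ ≤ (‖v 0‖ + C * T) * exp (-κ * T) := by
  have norm_cexp : ∀ (z : ℂ) (t : ℝ), ‖Complex.exp (z * t)‖ = exp (z.re * t) := by
    intro z t; simp [Complex.norm_exp]
  set g : ℝ → ℂ := fun t => Complex.exp (-l * t) * v t
  have hg : ∀ t ≥ (0 : ℝ), HasDerivAt g (Complex.exp (-l * t) * (v' t - l * v t)) t := by
    intro t ht
    have hexp : HasDerivAt (fun s : ℝ => Complex.exp (-l * s)) (Complex.exp (-l * t) * -l) t := by
      simpa using ((hasDerivAt_id (t : ℂ)).const_mul (-l)).cexp.comp_ofReal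
    exact (hexp.mul (hv t ht)).congr_deriv (by ring)
  have hg' : ∀ s ∈ Set.Icc 0 T,
      ‖Complex.exp (-l * s) * (v' s - l * v s)‖ ≤ C * exp ((-l.re - κ) * T) := by
    intro s hs
    rw [norm_mul, norm_cexp, Complex.neg_re]
    calc exp (-l.re * s) * ‖v' s - l * v s‖ ≤ exp (-l.re * s) * (C * exp (-μ * s)) :=
          mul_le_mul_of_nonneg_left (hr s hs.1) (exp_nonneg _)
      _ = C * exp ((-l.re - μ) * s) := by rw [mul_left_comm, ← exp_add]; congr 2; ring
      _ ≤ C * exp ((-l.re - κ) * T) := by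
          gcongr C * exp ?_
          nlinarith [hs.1, hs.2]
  have hgT : ‖g T‖ ≤ ‖v 0‖ + C * exp ((-l.re - κ) * T) * T := by
    have := (convex_Icc 0 T).norm_image_sub_le_of_norm_hasDerivWithin_le
      (fun t ht => (hg t ht.1).hasDerivWithinAt) hg' (Set.left_mem_Icc.2 hT)
      (Set.right_mem_Icc.2 hT)
    simp only [g, Complex.ofReal_zero, mul_zero, Complex.exp_zero, one_mul, sub_zero,
      Real.norm_of_nonneg hT] at this ⊢
    linarith [norm_le_norm_add_norm_sub' (Complex.exp (-l * T) * v T) (v 0)]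
  have hvg : v T = Complex.exp (l * T) * g T := by
    simp only [g, ← mul_assoc, ← Complex.exp_add, neg_mul, add_neg_cancel,
      Complex.exp_zero, one_mul]
  have hexp : exp (l.re * T) * exp ((-l.re - κ) * T) = exp (-κ * T) := by
    rw [← exp_add]; ring_nf
  have hlκ : exp (l.re * T) ≤ exp (-κ * T) := by gcongr; linarith
  calc ‖v T‖ = exp (l.re * T) * ‖g T‖ := by rw [hvg, norm_mul, norm_cexp]
    _ ≤ exp (l.re * T) * (‖v 0‖ + C * exp ((-l.re - κ) * T) * T) := by gcongr
    _ = exp (l.re * T) * ‖v 0‖ + C * T * exp (-κ * T) := by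
        linear_combination (C * T) * hexp
    _ ≤ (‖v 0‖ + C * T) * exp (-κ * T) := by
        nlinarith [mul_le_mul_of_nonneg_right hlκ (norm_nonneg (v 0))]

theorem ExpDecay.of_hasDerivAt_sub_mul {v v' : ℝ → ℂ} {l : ℂ} (hl : l.re < 0)
    (hv : ∀ t ≥ (0 : ℝ), HasDerivAt v (v' t) t) (hr : ExpDecay fun t => v' t - l * v t) :
    ExpDecay v := by
  obtain ⟨C, hC, μ, hμ, hr⟩ := hr
  have hκ : 0 < min μ (-l.re) := lt_min hμ (neg_pos.2 hl)
  refine ⟨‖v 0‖ + 2 * C / min μ (-l.re), by positivity, min μ (-l.re) / 2, by positivity,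
    fun T hT => ?_⟩
  exact (norm_le_of_hasDerivAt_sub_mul hC (min_le_left _ _) (min_le_right _ _) hv hr hT).trans
    (affine_mul_exp_le (norm_nonneg _) hC hκ hT)

def shift (R M : Type*) [Semiring R] [AddCommMonoid M] [Module R M] : Module.End R (ℕ → M) :=
  LinearMap.funLeft R M Nat.succ

section Shift
variable {R M : Type*} [CommSemiring R] [AddCommMonoid M] [Module R M]

@[simp]
theorem shift_apply (W : ℕ → M) (n : ℕ) : shift R M W n = W (n + 1) := rfl

theorem shift_pow_apply (k : ℕ) (W : ℕ → M) (n : ℕ) : (shift R M ^ k) W n = W (n + k) := by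
  induction k generalizing n with
  | zero => rfl
  | succ k ih =>
    rw [pow_succ', Module.End.mul_apply]
    exact (ih (n + 1)).trans (by rw [add_right_comm, add_assoc])

theorem aeval_shift_apply (p : R[X]) (W : ℕ → M) (n : ℕ) :
    aeval (shift R M) p W n = p.sum fun k c => c • W (n + k) := by
  induction p using Polynomial.induction_on' with
  | add p q hp hq =>
    rw [map_add, LinearMap.add_apply, Pi.add_apply, hp, hq, sum_add_index] <;>
      simp [add_smul]
  | monomial k c =>
    rw [aeval_monomial, sum_monomial_index _ _ (by simp)]
    simp [shift_pow_apply, Algebra.algebraMap_eq_smul_one]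

theorem aeval_shift_mul_comm (p q : R[X]) (W : ℕ → M) :
    aeval (shift R M) p (aeval (shift R M) q W) = aeval (shift R M) q (aeval (shift R M) p W) := by
  rw [← Module.End.mul_apply, ← map_mul, mul_comm, map_mul, Module.End.mul_apply]

end Shift

/-- Sequences listing the successive derivatives of their first term on `[0, ∞)`; on them
`aeval (shift 𝕜 (ℝ → 𝕜)) p` acts as the differential operator `p(d/dt)`. -/
def derivChains (𝕜 : Type*) [RCLike 𝕜] : Submodule 𝕜 (ℕ → ℝ → 𝕜) where
  carrier := {W | ∀ n, ∀ t ≥ (0 : ℝ), HasDerivAt (W n) (W (n + 1) t) t}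
  add_mem' hW hV n t ht := (hW n t ht).add (hV n t ht)
  zero_mem' _ t _ := hasDerivAt_const t 0
  smul_mem' c _ hW n t ht := (hW n t ht).const_mul c

theorem aeval_shift_mem_derivChains {𝕜 : Type*} [RCLike 𝕜] {W : ℕ → ℝ → 𝕜}
    (hW : W ∈ derivChains 𝕜) (p : 𝕜[X]) : aeval (shift 𝕜 (ℝ → 𝕜)) p W ∈ derivChains 𝕜 := by
  intro n t ht
  simp only [aeval_shift_apply, sum_def, Finset.sum_fn, Finset.sum_apply, Pi.smul_apply,
    smul_eq_mul, add_right_comm n 1]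
  exact HasDerivAt.fun_sum fun k _ => (hW (n + k) t ht).const_mul _

theorem ofReal_mem_derivChains {W : ℕ → ℝ → ℝ} (hW : W ∈ derivChains ℝ) :
    (fun n t => (W n t : ℂ)) ∈ derivChains ℂ :=
  fun n t ht => (hW n t ht).ofReal_comp

theorem aeval_shift_map_ofReal (p : ℝ[X]) (W : ℕ → ℝ → ℝ) (n : ℕ) (t : ℝ) :
    aeval (shift ℂ (ℝ → ℂ)) (p.map (algebraMap ℝ ℂ)) (fun k s => (W k s : ℂ)) n t =
      (aeval (shift ℝ (ℝ → ℝ)) p W n t : ℂ) := by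
  rw [aeval_shift_apply, aeval_shift_apply, sum_def, sum_def,
    support_map_of_injective _ (algebraMap ℝ ℂ).injective]
  simp

theorem ExpDecay.of_aeval_shift_prod_X_sub_C_eq_zero {s : Multiset ℂ}
    (hs : ∀ z ∈ s, z.re < 0) {W : ℕ → ℝ → ℂ} (hW : W ∈ derivChains ℂ)
    (h0 : ∀ t ≥ (0 : ℝ), aeval (shift ℂ (ℝ → ℂ)) (s.map (X - C ·)).prod W 0 t = 0) :
    ExpDecay (W 0) := by
  induction s using Multiset.induction_on generalizing W with
  | empty =>
    refine ⟨0, le_rfl, 1, one_pos, fun t ht => ?_⟩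
    simpa using h0 t ht
  | cons l s ih =>
    set V := aeval (shift ℂ (ℝ → ℂ)) (X - C l) W
    have hV0 : V 0 = fun t => W 1 t - l * W 0 t := by
      funext t; simp [V]
    refine ExpDecay.of_hasDerivAt_sub_mul (hs l (Multiset.mem_cons_self l s)) (hW 0) ?_
    rw [← hV0]
    refine ih (fun z hz => hs z (Multiset.mem_cons_of_mem hz)) (aeval_shift_mem_derivChains hW _)
      fun t ht => ?_
    have h0t := h0 t ht
    rwa [Multiset.map_cons, Multiset.prod_cons, mul_comm, map_mul, Module.End.mul_apply] at h0t

theorem ExpDecay.of_aeval_shift_eq_zero {p : ℂ[X]} (hp : p.Monic)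
    (hroots : ∀ z ∈ p.roots, z.re < 0) {W : ℕ → ℝ → ℂ} (hW : W ∈ derivChains ℂ)
    (h0 : ∀ t ≥ (0 : ℝ), aeval (shift ℂ (ℝ → ℂ)) p W 0 t = 0) : ExpDecay (W 0) := by
  rw [(IsAlgClosed.splits p).eq_prod_roots_of_monic hp] at h0
  exact ExpDecay.of_aeval_shift_prod_X_sub_C_eq_zero hroots hW h0

theorem ExpDecay.of_aeval_shift_eq_zero_real {p : ℝ[X]} (hp : p.Monic)
    (hroots : ∀ z : ℂ, aeval z p = 0 → z.re < 0) {W : ℕ → ℝ → ℝ} (hW : W ∈ derivChains ℝ)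
    (h0 : ∀ t ≥ (0 : ℝ), aeval (shift ℝ (ℝ → ℝ)) p W 0 t = 0) : ExpDecay (W 0) := by
  have hrootsℂ : ∀ z ∈ (p.map (algebraMap ℝ ℂ)).roots, z.re < 0 := fun z hz =>
    hroots z (by rwa [mem_roots (hp.map _).ne_zero, IsRoot, eval_map_algebraMap] at hz)
  obtain ⟨C, hC, μ, hμ, h⟩ := ExpDecay.of_aeval_shift_eq_zero (hp.map _) hrootsℂ
    (ofReal_mem_derivChains hW) fun t ht => by
      rw [aeval_shift_map_ofReal, h0 t ht, Complex.ofReal_zero]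
  exact ⟨C, hC, μ, hμ, fun t ht => by simpa using h t ht⟩

noncomputable def sinDerivs (A ω φ : ℝ) : ℕ → ℝ → ℝ :=
  fun n t => A * ω ^ n * sin (ω * t + φ + n * (π / 2))

theorem sinDerivs_mem_derivChains (A ω φ : ℝ) : sinDerivs A ω φ ∈ derivChains ℝ := by
  intro n t _
  have h := (((hasDerivAt_id t).const_mul ω).add_const φ |>.add_const (n * (π / 2))).sin
  refine (h.const_mul (A * ω ^ n)).congr_deriv ?_
  simp only [sinDerivs, id, Nat.cast_succ, add_one_mul, ← add_assoc, sin_add_pi_div_two]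
  ring

theorem aeval_shift_sinDerivs (A ω φ : ℝ) :
    aeval (shift ℝ (ℝ → ℝ)) (X ^ 2 + C (ω ^ 2)) (sinDerivs A ω φ) = 0 := by
  funext n t
  have hsin : sin (ω * t + φ + ↑(n + 2) * (π / 2)) = -sin (ω * t + φ + n * (π / 2)) := by
    rw [Nat.cast_add, add_mul, ← add_assoc, Nat.cast_two, two_mul, ← add_assoc,
      sin_add_pi_div_two, cos_add_pi_div_two]
  simp only [map_add, aeval_X_pow, aeval_C, LinearMap.add_apply, Module.algebraMap_end_apply,
    Pi.add_apply, Pi.smul_apply, Pi.zero_apply, smul_eq_mul, shift_pow_apply]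
  simp only [sinDerivs, hsin]
  ring

theorem aeval_shift_prod_sum_sinDerivs {ι : Type*} [Fintype ι] (A ω φ : ι → ℝ) :
    aeval (shift ℝ (ℝ → ℝ)) (∏ i, (X ^ 2 + C (ω i ^ 2)))
      (∑ i, sinDerivs (A i) (ω i) (φ i)) = 0 := by
  classical
  rw [map_sum]
  refine Finset.sum_eq_zero fun i hi => ?_
  rw [← Finset.mul_prod_erase _ _ hi, mul_comm, map_mul, Module.End.mul_apply,
    aeval_shift_sinDerivs, map_zero]

section Companion
variable {M : ℕ} (a : Fin M → ℝ) (f : ℕ → ℝ → ℝ) (ξ : ℝ → Fin M → ℝ)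

/-- The derivatives of all orders of the first state `ξ₀` of the system `ξₖ' = ξₖ₊₁`,
`ξ_{M-1}' = f 0 - Σ aₖ ξₖ`; beyond the states they come from differentiating
`ξ₀^{(M)} = f - Σ aₖ ξ₀^{(k)}`. -/
noncomputable def companionDerivs : ℕ → ℝ → ℝ
  | n, t => if h : n < M then ξ t ⟨n, h⟩
      else f (n - M) t - ∑ k : Fin M, a k * companionDerivs (n - M + k) t
termination_by n => n
decreasing_by omega

theorem companionDerivs_of_lt {n : ℕ} (h : n < M) (t : ℝ) :
    companionDerivs a f ξ n t = ξ t ⟨n, h⟩ := by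
  rw [companionDerivs, dif_pos h]

theorem companionDerivs_add (n : ℕ) (t : ℝ) :
    companionDerivs a f ξ (n + M) t =
      f n t - ∑ k : Fin M, a k * companionDerivs a f ξ (n + k) t := by
  rw [companionDerivs, dif_neg (by omega), Nat.add_sub_cancel]

theorem companionDerivs_self (t : ℝ) :
    companionDerivs a f ξ M t = f 0 t - ∑ k : Fin M, a k * ξ t k := by
  rw [companionDerivs, dif_neg (lt_irrefl M), Nat.sub_self]
  simp only [zero_add, companionDerivs_of_lt a f ξ (Fin.is_lt _), Fin.eta]

noncomputable def companionPoly : ℝ[X] := X ^ M + ∑ k : Fin M, C (a k) * X ^ (k : ℕ)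

theorem companionPoly_monic : (companionPoly a).Monic := monic_X_pow_add (degree_sum_fin_lt a)

theorem aeval_companionPoly (z : ℂ) :
    aeval z (companionPoly a) = z ^ M + ∑ k : Fin M, (a k : ℂ) * z ^ (k : ℕ) := by
  simp [companionPoly]

theorem aeval_shift_companionPoly_companionDerivs :
    aeval (shift ℝ (ℝ → ℝ)) (companionPoly a) (companionDerivs a f ξ) = f := by
  funext n t
  simp [companionPoly, shift_pow_apply, companionDerivs_add, Finset.sum_apply]

theorem companionDerivs_mem_derivChains (hM : 0 < M) (hf : f ∈ derivChains ℝ)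
    (hξ : ∀ (k : Fin M) (hk : (k : ℕ) + 1 < M) (t : ℝ), 0 ≤ t →
      HasDerivAt (fun s => ξ s k) (ξ t ⟨(k : ℕ) + 1, hk⟩) t)
    (hξlast : ∀ t : ℝ, 0 ≤ t →
      HasDerivAt (fun s => ξ s ⟨M - 1, by omega⟩) (-(∑ k : Fin M, a k * ξ t k) + f 0 t) t) :
    companionDerivs a f ξ ∈ derivChains ℝ := by
  intro n
  induction n using Nat.strong_induction_on with
  | _ n ih =>
  intro t ht
  rcases lt_or_ge n M with hn | hn
  · have hfun : companionDerivs a f ξ n = fun s => ξ s ⟨n, hn⟩ :=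
      funext (companionDerivs_of_lt a f ξ hn)
    rw [hfun]
    rcases (show n + 1 ≤ M by omega).lt_or_eq with hn' | hn'
    · rw [companionDerivs_of_lt a f ξ hn']
      exact hξ ⟨n, hn⟩ hn' t ht
    · have hidx : (⟨n, hn⟩ : Fin M) = ⟨M - 1, by omega⟩ := Fin.ext (by simp; omega)
      rw [hidx, hn', companionDerivs_self]
      exact (hξlast t ht).congr_deriv (by ring)
  · obtain ⟨m, rfl⟩ := Nat.exists_eq_add_of_le' hn
    have hfun : companionDerivs a f ξ (m + M) =
        fun s => f m s - ∑ k : Fin M, a k * companionDerivs a f ξ (m + k) s :=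
      funext (companionDerivs_add a f ξ m)
    rw [hfun, add_right_comm, companionDerivs_add]
    refine (hf m t ht).sub (HasDerivAt.fun_sum fun k _ => ?_)
    rw [add_right_comm]
    exact (ih (m + k) (by omega) t ht).const_mul (a k)

end Companion


/-- Lemma 1, State-Variable Filter regression: the SVF output
`y(t) = Σ a_{k-1} ξ_k(t) - a_0 u(t)` satisfies `y(t) = φ(t)ᵀθ + ε(t)` with `ε`
exponentially decaying, where `φ_j(t) = ξ_{2(N-j)+1}(t)` and `θ` is the coefficient
vector of `∏ (X² + ω_i²)`. -/
theorem statement1 (N : ℕ) (hN : 1 ≤ N) (A ph ω : Fin N → ℝ)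
    (u : ℝ → ℝ) (hu : ∀ t, u t = ∑ i, A i * Real.sin (ω i * t + ph i))
    (θ : Fin N → ℝ)
    (hθ : (∏ i, (Polynomial.X ^ 2 + Polynomial.C ((ω i) ^ 2)) : Polynomial ℝ) =
      Polynomial.X ^ (2 * N) +
        ∑ j : Fin N, Polynomial.C (θ j) * Polynomial.X ^ (2 * (N - 1 - j.val)))
    (a : Fin (2 * N) → ℝ)
    (hHurwitz : ∀ z : ℂ,
      z ^ (2 * N) + ∑ k : Fin (2 * N), (a k : ℂ) * z ^ (k : ℕ) = 0 → z.re < 0)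
    (ξ : ℝ → Fin (2 * N) → ℝ)
    (hξ : ∀ (k : Fin (2 * N)) (hk : (k : ℕ) + 1 < 2 * N) (t : ℝ), 0 ≤ t →
      HasDerivAt (fun s => ξ s k) (ξ t ⟨(k : ℕ) + 1, hk⟩) t)
    (hξlast : ∀ t : ℝ, 0 ≤ t →
      HasDerivAt (fun s => ξ s ⟨2 * N - 1, by omega⟩)
        (-(∑ k : Fin (2 * N), a k * ξ t k) + a ⟨0, by omega⟩ * u t) t)
    (y : ℝ → ℝ)
    (hy : ∀ t, y t = ∑ k : Fin (2 * N), a k * ξ t k - a ⟨0, by omega⟩ * u t)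
    (φ : ℝ → Fin N → ℝ)
    (hφ : ∀ t (j : Fin N), φ t j = ξ t ⟨2 * (N - 1 - (j : ℕ)), by omega⟩) :
    ∃ C ≥ (0 : ℝ), ∃ lam > (0 : ℝ), ∀ t ≥ (0 : ℝ),
      |y t - ∑ j, φ t j * θ j| ≤ C * Real.exp (-lam * t) := by
  have h0 : 0 < 2 * N := by omega
  set U := ∑ i, sinDerivs (A i) (ω i) (ph i)
  have hU0 : ∀ t, U 0 t = u t := fun t => by simp [U, sinDerivs, Finset.sum_apply, hu]
  have hU : U ∈ derivChains ℝ :=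
    Submodule.sum_mem _ fun i _ => sinDerivs_mem_derivChains (A i) (ω i) (ph i)
  set D := companionDerivs a (a ⟨0, h0⟩ • U) ξ
  have hD : D ∈ derivChains ℝ := companionDerivs_mem_derivChains a _ ξ h0
    (Submodule.smul_mem _ _ hU) hξ fun t ht => by simpa [hU0] using hξlast t ht
  set E := aeval (shift ℝ (ℝ → ℝ)) (∏ i, (X ^ 2 + C (ω i ^ 2))) D
  have hE : aeval (shift ℝ (ℝ → ℝ)) (companionPoly a) E = 0 := by
    rw [aeval_shift_mul_comm, aeval_shift_companionPoly_companionDerivs, map_smul,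
      aeval_shift_prod_sum_sinDerivs, smul_zero]
  have hE0 : ∀ t, E 0 t = ∑ j, φ t j * θ j - y t := by
    intro t
    simp only [E, hθ, map_add, map_sum, map_mul, aeval_X_pow, aeval_C, LinearMap.add_apply,
      LinearMap.sum_apply, Module.End.mul_apply, Module.algebraMap_end_apply, Pi.add_apply,
      Finset.sum_apply, Pi.smul_apply, smul_eq_mul, shift_pow_apply, zero_add]
    have hDlast : D (2 * N) t = -y t := by
      refine (companionDerivs_self a _ ξ t).trans ?_
      rw [hy, Pi.smul_apply, Pi.smul_apply, smul_eq_mul, hU0]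
      ring
    have hDφ : ∀ j : Fin N, D (2 * (N - 1 - j)) t = φ t j := fun j => by
      rw [hφ]; exact companionDerivs_of_lt a _ ξ _ t
    simp only [hDlast, hDφ, mul_comm (θ _)]
    ring
  obtain ⟨K, hK, μ, hμ, hdecay⟩ := ExpDecay.of_aeval_shift_eq_zero_real (companionPoly_monic a)
    (fun z hz => hHurwitz z (by rwa [aeval_companionPoly] at hz))
    (aeval_shift_mem_derivChains hD _) fun t _ => by rw [hE]; rfl
  refine ⟨K, hK, μ, hμ, fun t ht => ?_⟩
  rw [abs_sub_comm, ← hE0, ← Real.norm_eq_abs]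
  exact hdecay t ht
end

section
/- (Persistency of excitation of the steady-state regressor.) Let N ≥ 1, let ω_1,…,ω_N > 0 be pairwise distinct, let B_1,…,B_N > 0 and φ̄_1,…,φ̄_N ∈ ℝ. Define v : ℝ → ℝ^N by v_k(t) = Σ_{i=1}^N (−ω_i²)^{N−k} B_i sin(ω_i t + φ̄_i) for k = 1,…,N. Then v is persistently exciting: there exist T > 0 and δ > 0 such that for every t ≥ 0 and every c ∈ ℝ^N with ‖c‖ = 1, ∫_t^{t+T} (c · v(s))² ds ≥ δ. -/
/-!
Writing `x_i = -ω_i²`, the signal `c · v(s)` equals `∑ᵢ aᵢ sin (ω_i s + φ̄_i)` with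
`aᵢ = Bᵢ ∑ₖ cₖ x_i^(N-1-k)`. By the product-to-sum formula, the Gram matrix of the sinusoids over
`[t, t + T]` is `T/2 · I` up to an error bounded uniformly in `t` and `T` (the frequencies are
distinct and positive), so for large `T` the integral of the square dominates `∑ aᵢ²`. Since the
`x_i` are distinct, `c ↦ a` is injective (Vandermonde), hence bounded below on the unit sphere.
-/

open Real Finset Function

lemma abs_integral_cos_mul_add_le {α : ℝ} (hα : α ≠ 0) (β a b : ℝ) :
    |∫ s in a..b, cos (α * s + β)| ≤ 2 / |α| := by
  rw [intervalIntegral.integral_comp_mul_add cos hα β, integral_cos, smul_eq_mul, abs_mul,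
    abs_inv, inv_mul_eq_div]
  gcongr
  calc |sin (α * b + β) - sin (α * a + β)| ≤ |sin (α * b + β)| + |sin (α * a + β)| :=
        abs_sub _ _
    _ ≤ 2 := by linarith [abs_sin_le_one (α * b + β), abs_sin_le_one (α * a + β)]

lemma sin_mul_sin_eq (x y : ℝ) : sin x * sin y = (cos (x - y) - cos (x + y)) / 2 := by
  rw [cos_sub, cos_add]; ring

lemma integral_sin_mul_sin (ω₁ ω₂ φ₁ φ₂ a b : ℝ) :
    ∫ s in a..b, sin (ω₁ * s + φ₁) * sin (ω₂ * s + φ₂) =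
      ((∫ s in a..b, cos ((ω₁ - ω₂) * s + (φ₁ - φ₂))) -
        ∫ s in a..b, cos ((ω₁ + ω₂) * s + (φ₁ + φ₂))) / 2 := by
  have h : ∀ s, sin (ω₁ * s + φ₁) * sin (ω₂ * s + φ₂) =
      (cos ((ω₁ - ω₂) * s + (φ₁ - φ₂)) - cos ((ω₁ + ω₂) * s + (φ₁ + φ₂))) / 2 := fun s => by
    rw [sin_mul_sin_eq]; ring_nf
  simp_rw [h]
  rw [intervalIntegral.integral_div, intervalIntegral.integral_sub
    ((by fun_prop : Continuous _).intervalIntegrable _ _)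
    ((by fun_prop : Continuous _).intervalIntegrable _ _)]

lemma abs_integral_sin_sq_sub_le {ω : ℝ} (hω : ω ≠ 0) (φ a b : ℝ) :
    |(∫ s in a..b, sin (ω * s + φ) * sin (ω * s + φ)) - (b - a) / 2| ≤ 1 / (2 * |ω|) := by
  have h := abs_integral_cos_mul_add_le (mul_ne_zero two_ne_zero hω) (φ + φ) a b
  rw [abs_mul, abs_two, div_mul_cancel_left₀ two_ne_zero] at h
  rw [integral_sin_mul_sin, ← two_mul]
  simp only [sub_self, zero_mul, zero_add, intervalIntegral.integral_const, smul_eq_mul, cos_zero,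
    mul_one]
  rw [show ∀ x y : ℝ, (x - y) / 2 - x / 2 = -(y / 2) by intros; ring, abs_neg, abs_div, abs_two]
  calc _ ≤ |ω|⁻¹ / 2 := by gcongr
    _ = _ := by ring

lemma abs_integral_sin_mul_sin_le {ω₁ ω₂ : ℝ} (hsub : ω₁ - ω₂ ≠ 0) (hadd : ω₁ + ω₂ ≠ 0)
    (φ₁ φ₂ a b : ℝ) :
    |∫ s in a..b, sin (ω₁ * s + φ₁) * sin (ω₂ * s + φ₂)| ≤ 1 / |ω₁ - ω₂| + 1 / |ω₁ + ω₂| := by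
  have h₁ := abs_integral_cos_mul_add_le hsub (φ₁ - φ₂) a b
  have h₂ := abs_integral_cos_mul_add_le hadd (φ₁ + φ₂) a b
  rw [integral_sin_mul_sin, abs_div, abs_two, div_le_iff₀ two_pos]
  calc _ ≤ _ := abs_sub _ _
    _ ≤ _ := add_le_add h₁ h₂
    _ = _ := by ring

section

variable {ι : Type*} [Fintype ι]

lemma exists_abs_integral_sin_mul_sin_sub_le [DecidableEq ι] {ω : ι → ℝ} (hω : ∀ i, 0 < ω i)
    (hinj : Injective ω) (φ : ι → ℝ) :
    ∃ K ≥ 0, ∀ i j (a b : ℝ), |(∫ s in a..b, sin (ω i * s + φ i) * sin (ω j * s + φ j)) -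
      if i = j then (b - a) / 2 else 0| ≤ K := by
  let bound : ι × ι → ℝ := fun p => if p.1 = p.2 then 1 / (2 * |ω p.1|) else
    1 / |ω p.1 - ω p.2| + 1 / |ω p.1 + ω p.2|
  obtain ⟨M, hM⟩ := Finite.exists_le bound
  refine ⟨max M 0, le_max_right _ _, fun i j a b =>
    le_trans ?_ ((hM (i, j)).trans (le_max_left _ _))⟩
  by_cases hij : i = j
  · subst hij
    simpa [bound] using abs_integral_sin_sq_sub_le (hω i).ne' (φ i) a b
  · simpa [bound, hij] using abs_integral_sin_mul_sin_le (sub_ne_zero.2 (hinj.ne hij))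
      (add_pos (hω i) (hω j)).ne' (φ i) (φ j) a b

lemma integral_sq_sum_mul {f : ι → ℝ → ℝ} (hf : ∀ i, Continuous (f i)) (c : ι → ℝ) (a b : ℝ) :
    ∫ s in a..b, (∑ i, c i * f i s) ^ 2 =
      ∑ i, ∑ j, c i * c j * ∫ s in a..b, f i s * f j s := by
  have h : ∀ s, (∑ i, c i * f i s) ^ 2 = ∑ i, ∑ j, c i * c j * (f i s * f j s) := fun s => by
    rw [sq, sum_mul_sum]
    exact sum_congr rfl fun i _ => sum_congr rfl fun j _ => by ring
  simp_rw [h]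
  rw [intervalIntegral.integral_finsetSum fun i _ => ?_]
  · refine sum_congr rfl fun i _ => ?_
    rw [intervalIntegral.integral_finsetSum fun j _ => ?_]
    · simp_rw [intervalIntegral.integral_const_mul]
    · exact (continuous_const.mul ((hf i).mul (hf j))).intervalIntegrable _ _
  · exact (continuous_finsetSum _ fun j _ =>
      continuous_const.mul ((hf i).mul (hf j))).intervalIntegrable _ _

lemma mul_sum_sq_le_sum_mul_mul [DecidableEq ι] {G : ι → ι → ℝ} {d K : ℝ} (hK : 0 ≤ K)
    (hG : ∀ i j, |G i j - if i = j then d else 0| ≤ K) (c : ι → ℝ) :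
    (d - K * Fintype.card ι) * ∑ i, c i ^ 2 ≤ ∑ i, ∑ j, c i * c j * G i j := by
  have hdiag : ∑ i, ∑ j, c i * c j * (if i = j then d else 0) = d * ∑ i, c i ^ 2 := by
    simp only [mul_ite, mul_zero, sum_ite_eq, mem_univ, if_true, mul_sum]
    exact sum_congr rfl fun i _ => by ring
  have hoff : ∑ i, ∑ j, |c i| * |c j| * K = K * (∑ i, |c i|) ^ 2 := by
    rw [sq, sum_mul_sum, mul_sum]
    exact sum_congr rfl fun i _ => by rw [mul_sum]; exact sum_congr rfl fun j _ => by ring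
  have hterm : ∀ i j, c i * c j * (if i = j then d else 0) - |c i| * |c j| * K ≤
      c i * c j * G i j := fun i j => by
    have h : |c i * c j * (G i j - if i = j then d else 0)| ≤ |c i| * |c j| * K := by
      rw [abs_mul, abs_mul]; exact mul_le_mul_of_nonneg_left (hG i j) (by positivity)
    linarith [neg_abs_le (c i * c j * (G i j - if i = j then d else 0))]
  have hCS : (∑ i, |c i|) ^ 2 ≤ Fintype.card ι * ∑ i, c i ^ 2 := by
    simpa using sq_sum_le_card_mul_sum_sq (s := univ) (f := fun i => |c i|)
  calc (d - K * Fintype.card ι) * ∑ i, c i ^ 2 ≤ d * ∑ i, c i ^ 2 - K * (∑ i, |c i|) ^ 2 := by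
        nlinarith [mul_le_mul_of_nonneg_left hCS hK]
    _ = ∑ i, ∑ j, (c i * c j * (if i = j then d else 0) - |c i| * |c j| * K) := by
        simp only [sum_sub_distrib, hdiag, hoff]
    _ ≤ _ := sum_le_sum fun i _ => sum_le_sum fun j _ => hterm i j

theorem exists_sum_sq_le_integral_sq_sum_mul_sin {ω : ι → ℝ} (hω : ∀ i, 0 < ω i)
    (hinj : Injective ω) (φ : ι → ℝ) :
    ∃ T > 0, ∀ (c : ι → ℝ) (t : ℝ),
      ∑ i, c i ^ 2 ≤ ∫ s in t..t + T, (∑ i, c i * sin (ω i * s + φ i)) ^ 2 := by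
  classical
  obtain ⟨K, hK, hG⟩ := exists_abs_integral_sin_mul_sin_sub_le hω hinj φ
  refine ⟨2 * (K * Fintype.card ι + 1), by positivity, fun c t => ?_⟩
  rw [integral_sq_sum_mul (fun i => by fun_prop)]
  refine le_trans (le_of_eq ?_) (mul_sum_sq_le_sum_mul_mul hK (fun i j => hG i j t _) c)
  ring

end

lemma eq_zero_of_forall_sum_mul_pow_rev_eq_zero {R : Type*} [CommRing R] [IsDomain R] {n : ℕ}
    {x c : Fin n → R} (hx : Injective x) (h : ∀ i, ∑ k, c k * x i ^ (n - 1 - (k : ℕ)) = 0) :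
    c = 0 := by
  have hrev : c ∘ Fin.rev = 0 := by
    refine Matrix.eq_zero_of_forall_index_sum_mul_pow_eq_zero hx fun i => ?_
    rw [← h i]
    refine sum_bijective Fin.rev Fin.rev_bijective (by simp) fun k _ => ?_
    rw [comp_apply, Fin.val_rev]
    congr 2
    omega
  ext k
  simpa using congrFun hrev (Fin.rev k)

theorem exists_pos_mul_norm_sq_le_sum_sq {n : ℕ} {x B : Fin n → ℝ} (hx : Injective x)
    (hB : ∀ i, B i ≠ 0) :
    ∃ m > 0, ∀ c : EuclideanSpace ℝ (Fin n),
      m * ‖c‖ ^ 2 ≤ ∑ i, (B i * ∑ k, c k * x i ^ (n - 1 - (k : ℕ))) ^ 2 := by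
  let L := Matrix.toLpLin 2 2 (Matrix.of fun i (k : Fin n) => B i * x i ^ (n - 1 - (k : ℕ)))
  have hL : ∀ c i, L c i = B i * ∑ k, c k * x i ^ (n - 1 - (k : ℕ)) := fun c i => by
    simp only [L, Matrix.toLpLin_apply, Matrix.mulVec, dotProduct, Matrix.of_apply, mul_sum]
    exact sum_congr rfl fun k _ => by ring
  have hker : LinearMap.ker L = ⊥ := by
    refine LinearMap.ker_eq_bot'.2 fun c hc => ?_
    have h := eq_zero_of_forall_sum_mul_pow_rev_eq_zero hx fun i =>
      (mul_eq_zero.1 ((hL c i).symm.trans (congrArg (· i) hc))).resolve_left (hB i)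
    ext k
    exact congrFun h k
  obtain ⟨K, hK, hanti⟩ := L.exists_antilipschitzWith hker
  refine ⟨1 / (K : ℝ) ^ 2, by positivity, fun c => ?_⟩
  have h := hanti.le_mul_dist c 0
  rw [map_zero, dist_zero_right, dist_zero_right] at h
  have hLc : ‖L c‖ ^ 2 = ∑ i, (B i * ∑ k, c k * x i ^ (n - 1 - (k : ℕ))) ^ 2 := by
    simp only [EuclideanSpace.real_norm_sq_eq, hL]
  rw [← hLc, one_div_mul_eq_div, div_le_iff₀' (by positivity), ← mul_pow]
  exact pow_le_pow_left₀ (norm_nonneg c) h 2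

theorem statement3_general (N : ℕ) (ω B phbar : Fin N → ℝ)
    (hω : ∀ i, ω i > 0) (hdist : Function.Injective ω) (hB : ∀ i, B i > 0)
    (v : ℝ → Fin N → ℝ)
    (hv : ∀ t (k : Fin N),
      v t k = ∑ i, (-(ω i) ^ 2) ^ (N - 1 - (k : ℕ)) * B i * Real.sin (ω i * t + phbar i)) :
    ∃ T > (0 : ℝ), ∃ δ > (0 : ℝ), ∀ t ≥ (0 : ℝ),
      ∀ c : EuclideanSpace ℝ (Fin N), ‖c‖ = 1 →
        δ ≤ ∫ s in t..(t + T), (∑ k, c k * v s k) ^ 2 := by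
  have hsq : Injective fun i => -ω i ^ 2 := fun i j h =>
    hdist <| (pow_left_inj₀ (hω i).le (hω j).le two_ne_zero).1 (neg_inj.1 h)
  obtain ⟨m, hm, hmc⟩ := exists_pos_mul_norm_sq_le_sum_sq hsq fun i => (hB i).ne'
  obtain ⟨T, hT, hTc⟩ := exists_sum_sq_le_integral_sq_sum_mul_sin hω hdist phbar
  refine ⟨T, hT, m, hm, fun t _ c hc => ?_⟩
  have hcv : ∀ s, ∑ k, c k * v s k =
      ∑ i, (B i * ∑ k, c k * (-ω i ^ 2) ^ (N - 1 - (k : ℕ))) * sin (ω i * s + phbar i) :=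
    fun s => by
      simp only [hv, mul_sum, sum_mul]
      rw [sum_comm]
      exact sum_congr rfl fun i _ => sum_congr rfl fun k _ => by ring
  simp_rw [hcv]
  calc m = m * ‖c‖ ^ 2 := by rw [hc]; ring
    _ ≤ _ := hmc c
    _ ≤ _ := hTc _ t

/-- persistency of excitation of the steady-state regressor
`v_k(t) = Σ_i (-ω_i²)^{N-k} B_i sin(ω_i t + φ̄_i)`. -/
theorem statement3 (N : ℕ) (hN : 1 ≤ N) (ω B phbar : Fin N → ℝ)
    (hω : ∀ i, ω i > 0) (hdist : Function.Injective ω) (hB : ∀ i, B i > 0)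
    (v : ℝ → Fin N → ℝ)
    (hv : ∀ t (k : Fin N),
      v t k = ∑ i, (-(ω i) ^ 2) ^ (N - 1 - (k : ℕ)) * B i * Real.sin (ω i * t + phbar i)) :
    ∃ T > (0 : ℝ), ∃ δ > (0 : ℝ), ∀ t ≥ (0 : ℝ),
      ∀ c : EuclideanSpace ℝ (Fin N), ‖c‖ = 1 →
        δ ≤ ∫ s in t..(t + T), (∑ k, c k * v s k) ^ 2 :=
  statement3_general N ω B phbar hω hdist hB v hv
end

section
/- Let k > 0, let ψ : ℝ → ℝ be continuous, and let x : ℝ → ℝ be differentiable on [0,∞) with x'(t) = −k ψ(t)² x(t) for all t ≥ 0. Suppose ψ is persistently exciting: there exist T > 0 and δ > 0 such that ∫_t^{t+T} ψ(s)² ds ≥ δ for all t ≥ 0. Then x converges to zero exponentially fast: there exist C ≥ 0 and λ > 0 such that |x(t)| ≤ C e^{−λ t} |x(0)| for all t ≥ 0. -/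
/-!
Multiplying by the integrating factor `exp (k ∫₀ᵗ ψ²)` gives the explicit solution
`x t = x 0 * exp (-k ∫₀ᵗ ψ²)`. Persistent excitation makes `∫₀ᵗ ψ²` grow at least linearly:
each window `[nT, (n+1)T]` contributes at least `δ`, so `∫₀ᵗ ψ² ≥ δ (t / T - 1)`, and
therefore `|x t| ≤ exp (k δ) * exp (-(k δ / T) t) * |x 0|`.
-/

open Real intervalIntegral

theorem eq_mul_exp_integral_of_hasDerivAt_mul {a x : ℝ → ℝ} (ha : Continuous a)
    (hx : ∀ t ≥ (0 : ℝ), HasDerivAt x (a t * x t) t) {t : ℝ} (ht : 0 ≤ t) :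
    x t = x 0 * exp (∫ s in (0 : ℝ)..t, a s) := by
  set A : ℝ → ℝ := fun t => ∫ s in (0 : ℝ)..t, a s
  have hA : ∀ s, HasDerivAt A (a s) s := fun s => (ha.integral_hasStrictDerivAt 0 s).hasDerivAt
  have hderiv : ∀ s ≥ (0 : ℝ), HasDerivAt (fun s => x s * exp (-A s)) 0 s := by
    intro s hs
    refine ((hx s hs).fun_mul (hA s).neg.exp).congr_deriv ?_
    ring
  have hconst := constant_of_has_deriv_right_zero (a := 0) (b := t)
    (fun s hs => (hderiv s hs.1).continuousAt.continuousWithinAt)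
    (fun s hs => (hderiv s hs.1).hasDerivWithinAt) t ⟨ht, le_rfl⟩
  have hA0 : A 0 = 0 := integral_same
  simp only [hA0, neg_zero, exp_zero, mul_one] at hconst
  rw [← hconst, mul_assoc, ← exp_add, neg_add_cancel, exp_zero, mul_one]

section PersistentExcitation

variable {g : ℝ → ℝ} {T δ : ℝ}

theorem nat_mul_le_integral_of_forall_le_integral
    (hg : ∀ a b, IntervalIntegrable g MeasureTheory.volume a b) (hT : 0 ≤ T)
    (hPE : ∀ t ≥ (0 : ℝ), δ ≤ ∫ s in t..(t + T), g s) (n : ℕ) :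
    n * δ ≤ ∫ s in (0 : ℝ)..(n * T), g s := by
  induction n with
  | zero => simp
  | succ n ih =>
    have hwindow := hPE (n * T) (by positivity)
    rw [Nat.cast_succ, add_one_mul, add_one_mul,
      ← integral_add_adjacent_intervals (hg 0 (n * T)) (hg _ _)]
    linarith

theorem mul_sub_one_le_integral_of_forall_le_integral (hg_nonneg : 0 ≤ g)
    (hg : ∀ a b, IntervalIntegrable g MeasureTheory.volume a b) (hT : 0 < T) (hδ : 0 ≤ δ)
    (hPE : ∀ t ≥ (0 : ℝ), δ ≤ ∫ s in t..(t + T), g s) {t : ℝ} (ht : 0 ≤ t) :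
    δ * (t / T - 1) ≤ ∫ s in (0 : ℝ)..t, g s := by
  set n := ⌊t / T⌋₊
  have hnT : n * T ≤ t := (le_div_iff₀ hT).1 (Nat.floor_le (by positivity))
  have hn : t / T - 1 ≤ n := by linarith [Nat.lt_floor_add_one (t / T)]
  calc δ * (t / T - 1) ≤ n * δ := by nlinarith
    _ ≤ ∫ s in (0 : ℝ)..(n * T), g s :=
      nat_mul_le_integral_of_forall_le_integral hg hT.le hPE n
    _ ≤ ∫ s in (0 : ℝ)..t, g s :=
      integral_mono_interval le_rfl (by positivity) hnT
        (Filter.Eventually.of_forall hg_nonneg) (hg 0 t)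

end PersistentExcitation

/-- if `ψ` is persistently exciting then the solution of the scalar
DREM error dynamics `x' = -k ψ(t)² x` converges to zero exponentially fast. -/
theorem statement7 (k : ℝ) (hk : k > 0) (ψ : ℝ → ℝ) (hψ : Continuous ψ)
    (x : ℝ → ℝ)
    (hx : ∀ t ≥ (0 : ℝ), HasDerivAt x (-k * (ψ t) ^ 2 * x t) t)
    (T δ : ℝ) (hT : T > 0) (hδ : δ > 0)
    (hPE : ∀ t ≥ (0 : ℝ), δ ≤ ∫ s in t..(t + T), (ψ s) ^ 2) :
    ∃ C ≥ (0 : ℝ), ∃ lam > (0 : ℝ), ∀ t ≥ (0 : ℝ),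
      |x t| ≤ C * Real.exp (-lam * t) * |x 0| := by
  have hψsq : Continuous fun s => ψ s ^ 2 := hψ.pow 2
  refine ⟨exp (k * δ), (exp_pos _).le, k * δ / T, by positivity, fun t ht => ?_⟩
  have hgrowth := mul_sub_one_le_integral_of_forall_le_integral (fun s => sq_nonneg (ψ s))
    hψsq.intervalIntegrable hT hδ.le hPE ht
  rw [eq_mul_exp_integral_of_hasDerivAt_mul (a := fun s => -k * ψ s ^ 2) (by fun_prop) hx ht,
    abs_mul, abs_exp, integral_const_mul, mul_comm, ← exp_add]
  gcongr
  have hrate : k * δ + -(k * δ / T) * t = -k * (δ * (t / T - 1)) := by ring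
  rw [hrate]
  nlinarith
end

section
/- (Proposition 2 with delay operators, asymptotic convergence.) Let q ≥ 1, let r ∈ ℝ^q, let m : ℝ → ℝ^q be bounded and continuous, and let ρ : ℝ → ℝ satisfy ρ(t) = m(t)ᵀ r for all t ∈ ℝ. Let d_1,…,d_{q−1} > 0 be pairwise distinct delays. Define the extended regressor matrix M_e(t) ∈ ℝ^{q×q} whose first row is m(t)ᵀ and whose (j+1)-th row is m(t−d_j)ᵀ for j = 1,…,q−1, the vector R_e(t) = (ρ(t), ρ(t−d_1),…,ρ(t−d_{q−1}))ᵀ, the scalar ψ(t) = det M_e(t), and R(t) = adj(M_e(t)) R_e(t), where adj denotes the adjugate matrix. Let k_1,…,k_q > 0 and let r̂ : ℝ → ℝ^q be differentiable on [0,∞) with r̂_i'(t) = k_i ψ(t) (R_i(t) − ψ(t) r̂_i(t)) for all t ≥ 0 and i = 1,…,q. If ∫_0^t ψ(s)² ds → ∞ as t → ∞ (i.e. ψ ∉ L²), then r̂_i(t) → r_i as t → ∞ for every i = 1,…,q. -/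
/-!
Premultiplying the extended regression `R_e = M_e r` by `adj M_e` decouples it into the scalar
regressions `R_i = ψ r_i`, so each estimation error `e = r̂_i - r_i` obeys `e' = -k_i ψ² e`.
Hence `e(t) = e(0) exp (-k_i ∫₀ᵗ ψ²)`, which tends to `0` because `ψ ∉ L²`.
-/

open Filter Topology Matrix

theorem Matrix.adjugate_mulVec_mulVec {n α : Type*} [Fintype n] [DecidableEq n] [CommRing α]
    (M : Matrix n n α) (v : n → α) : M.adjugate *ᵥ (M *ᵥ v) = M.det • v := by
  rw [mulVec_mulVec, adjugate_mul, smul_mulVec, one_mulVec]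

section GradientEstimator

variable {ψ x : ℝ → ℝ} {k θ : ℝ}

theorem gradient_estimator_error_eq (hψ : Continuous ψ)
    (hx : ∀ t ≥ 0, HasDerivAt x (k * ψ t * (ψ t * θ - ψ t * x t)) t) {t : ℝ} (ht : 0 ≤ t) :
    x t - θ = (x 0 - θ) * Real.exp (-(k * ∫ s in (0 : ℝ)..t, ψ s ^ 2)) := by
  set g : ℝ → ℝ := fun u => ∫ s in (0 : ℝ)..u, ψ s ^ 2
  have hψ2 : Continuous fun s => ψ s ^ 2 := hψ.pow 2
  have hg : ∀ u, HasDerivAt g (ψ u ^ 2) u := fun u =>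
    intervalIntegral.integral_hasDerivAt_right (hψ2.intervalIntegrable _ _)
      (hψ2.stronglyMeasurableAtFilter _ _) hψ2.continuousAt
  -- `exp (k g)` is an integrating factor for `e' = -k ψ² e`.
  set E : ℝ → ℝ := fun u => (x u - θ) * Real.exp (k * g u)
  have hE : ∀ u ≥ 0, HasDerivAt E 0 u := fun u hu =>
    (((hx u hu).sub_const θ).mul ((hg u).const_mul k).exp).congr_deriv (by ring)
  have hE_const : E t = E 0 :=
    constant_of_has_deriv_right_zero (fun u hu => (hE u hu.1).continuousAt.continuousWithinAt)
      (fun u hu => (hE u hu.1).hasDerivWithinAt) t ⟨ht, le_rfl⟩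
  have hg0 : g 0 = 0 := intervalIntegral.integral_same
  calc x t - θ = E t * Real.exp (-(k * g t)) := by
        simp only [E, mul_assoc, ← Real.exp_add, add_neg_cancel, Real.exp_zero, mul_one]
    _ = (x 0 - θ) * Real.exp (-(k * g t)) := by
        simp only [hE_const, E, hg0, mul_zero, Real.exp_zero, mul_one]

theorem tendsto_gradient_estimator (hψ : Continuous ψ) (hk : 0 < k)
    (hx : ∀ t ≥ 0, HasDerivAt x (k * ψ t * (ψ t * θ - ψ t * x t)) t)
    (hL2 : Tendsto (fun t => ∫ s in (0 : ℝ)..t, ψ s ^ 2) atTop atTop) :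
    Tendsto x atTop (𝓝 θ) := by
  have hdecay : Tendsto (fun t => Real.exp (-(k * ∫ s in (0 : ℝ)..t, ψ s ^ 2))) atTop (𝓝 0) :=
    Real.tendsto_exp_atBot.comp (tendsto_neg_atTop_atBot.comp (hL2.const_mul_atTop hk))
  have hlim := (hdecay.const_mul (x 0 - θ)).const_add θ
  rw [mul_zero, add_zero] at hlim
  refine hlim.congr' ?_
  filter_upwards [eventually_ge_atTop 0] with t ht
  rw [← gradient_estimator_error_eq hψ hx ht, add_sub_cancel]

end GradientEstimator

/-- Proposition 2 with delay operators, asymptotic convergence: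
DREM with `q-1` pairwise-distinct delays; if `ψ = det M_e ∉ L²` then every
component of the scalar gradient estimator converges to the true parameter. -/
theorem statement8 (q : ℕ) (r : Fin q → ℝ)
    (m : ℝ → Fin q → ℝ) (hm_cont : Continuous m)
    (ρ : ℝ → ℝ) (hρ : ∀ t, ρ t = ∑ i, m t i * r i)
    (d : Fin (q - 1) → ℝ)
    (Me : ℝ → Matrix (Fin q) (Fin q) ℝ)
    (hMe : ∀ t (i j : Fin q), Me t i j =
      if h : (i : ℕ) = 0 then m t j else m (t - d ⟨(i : ℕ) - 1, by omega⟩) j)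
    (Re : ℝ → Fin q → ℝ)
    (hRe : ∀ t (i : Fin q), Re t i =
      if h : (i : ℕ) = 0 then ρ t else ρ (t - d ⟨(i : ℕ) - 1, by omega⟩))
    (ψ : ℝ → ℝ) (hψ : ∀ t, ψ t = (Me t).det)
    (R : ℝ → Fin q → ℝ) (hR : ∀ t, R t = (Me t).adjugate.mulVec (Re t))
    (k : Fin q → ℝ) (hk : ∀ i, k i > 0)
    (rhat : ℝ → Fin q → ℝ)
    (hrhat : ∀ t ≥ (0 : ℝ), ∀ i : Fin q,
      HasDerivAt (fun s => rhat s i) (k i * ψ t * (R t i - ψ t * rhat t i)) t)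
    (hL2 : Filter.Tendsto (fun t => ∫ s in (0 : ℝ)..t, (ψ s) ^ 2)
      Filter.atTop Filter.atTop) :
    ∀ i : Fin q, Filter.Tendsto (fun t => rhat t i) Filter.atTop (nhds (r i)) := by
  have hMe_cont : Continuous Me := by
    refine continuous_pi fun a => continuous_pi fun b => ?_
    simp only [hMe]
    split_ifs
    · exact (continuous_apply b).comp hm_cont
    · exact (continuous_apply b).comp (hm_cont.comp (continuous_sub_right _))
  have hψ_cont : Continuous ψ := by
    simpa only [← hψ] using hMe_cont.matrix_det
  have hRe_eq : ∀ t, Re t = Me t *ᵥ r := fun t => by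
    ext a
    simp only [hRe, hρ, mulVec, dotProduct, hMe]
    split_ifs <;> rfl
  have hR_eq : ∀ t i, R t i = ψ t * r i := fun t i => by
    rw [hR, hRe_eq, Matrix.adjugate_mulVec_mulVec, hψ, Pi.smul_apply, smul_eq_mul]
  intro i
  refine tendsto_gradient_estimator hψ_cont (hk i) (fun t ht => ?_) hL2
  simpa only [hR_eq] using hrhat t ht i
end

section
/- (Scalar error dynamics with exponentially decaying perturbation.) Let k > 0, let ψ : ℝ → ℝ be continuous and bounded, and suppose ψ is persistently exciting: there exist T, δ₀ > 0 with ∫_t^{t+T} ψ(s)² ds ≥ δ₀ for all t ≥ 0. Let δ : ℝ → ℝ be continuous with |δ(t)| ≤ C₀ e^{−λ₀ t} for all t ≥ 0, for some C₀ ≥ 0 and λ₀ > 0. If x : ℝ → ℝ is differentiable on [0,∞) with x'(t) = −k ψ(t)² x(t) + k ψ(t) δ(t) for all t ≥ 0, then there exist C ≥ 0 and λ > 0 such that |x(t)| ≤ C e^{−λ t} for all t ≥ 0; in particular x(t) → 0 as t → ∞. -/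
/-!
With the integrating factor `exp (∫₀ᵗ kψ²)`, variation of constants writes `x t` as the free
response `exp (-∫₀ᵗ kψ²) x 0` plus the convolution of the transition factor
`exp (-∫ₛᵗ kψ²)` with the forcing `kψδ`. Persistent excitation makes `∫ₛᵗ ψ²` grow at least
like `δ₀ ((t - s) / T - 1)`, so the transition factor decays exponentially; the forcing decays
exponentially because `ψ` is bounded, and the convolution of two exponential decays decays
at (half) the slower rate.
-/

open Real intervalIntegral MeasureTheory Filter Topology

section PersistentExcitation

variable {f : ℝ → ℝ} {T δ₀ : ℝ}

theorem nat_mul_le_integral_of_le_integral_period (hf : ∀ a b, IntervalIntegrable f volume a b)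
    (hT : 0 ≤ T) (hPE : ∀ t ≥ (0 : ℝ), δ₀ ≤ ∫ s in t..(t + T), f s) (n : ℕ) {s : ℝ}
    (hs : 0 ≤ s) : n * δ₀ ≤ ∫ u in s..(s + n * T), f u := by
  induction n with
  | zero => simp
  | succ n ih =>
    have hsplit := integral_add_adjacent_intervals (hf s (s + n * T)) (hf _ (s + n * T + T))
    have hlast := hPE (s + n * T) (by positivity)
    rw [show s + (n + 1 : ℕ) * T = s + n * T + T by push_cast; ring, ← hsplit]
    push_cast
    linarith

theorem le_integral_of_le_integral_period (hf : ∀ a b, IntervalIntegrable f volume a b)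
    (hf₀ : 0 ≤ f) (hT : 0 < T) (hPE : ∀ t ≥ (0 : ℝ), δ₀ ≤ ∫ s in t..(t + T), f s)
    (hδ₀ : 0 ≤ δ₀) {s t : ℝ} (hs : 0 ≤ s) (hst : s ≤ t) :
    δ₀ * ((t - s) / T) - δ₀ ≤ ∫ u in s..t, f u := by
  set n := ⌊(t - s) / T⌋₊
  have hdiv : 0 ≤ (t - s) / T := div_nonneg (by linarith) hT.le
  have hnT : n * T ≤ t - s := (le_div_iff₀ hT).1 (Nat.floor_le hdiv)
  have hn : (t - s) / T - 1 ≤ n := by linarith [Nat.lt_floor_add_one ((t - s) / T)]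
  have hsplit := integral_add_adjacent_intervals (hf s (s + n * T)) (hf _ t)
  have hrest : 0 ≤ ∫ u in (s + n * T)..t, f u :=
    integral_nonneg (by linarith) fun u _ => hf₀ u
  have hblocks := nat_mul_le_integral_of_le_integral_period hf hT.le hPE n hs
  nlinarith [mul_le_mul_of_nonneg_left hn hδ₀]

theorem exp_neg_integral_le_of_le_integral_period (hf : ∀ a b, IntervalIntegrable f volume a b)
    (hf₀ : 0 ≤ f) (hT : 0 < T) (hPE : ∀ t ≥ (0 : ℝ), δ₀ ≤ ∫ s in t..(t + T), f s)
    (hδ₀ : 0 ≤ δ₀) {s t : ℝ} (hs : 0 ≤ s) (hst : s ≤ t) :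
    exp (-∫ u in s..t, f u) ≤ exp δ₀ * exp (-(δ₀ / T) * (t - s)) := by
  rw [← exp_add, exp_le_exp]
  have hlower := le_integral_of_le_integral_period hf hf₀ hT hPE hδ₀ hs hst
  have hrw : δ₀ * ((t - s) / T) = δ₀ / T * (t - s) := by ring
  linarith

end PersistentExcitation

theorem eq_exp_neg_integral_mul_add_integral {p q x : ℝ → ℝ} (hp : Continuous p)
    (hq : Continuous q) (hx : ∀ t ≥ (0 : ℝ), HasDerivAt x (-p t * x t + q t) t) {t : ℝ}
    (ht : 0 ≤ t) :
    x t = exp (-∫ u in (0 : ℝ)..t, p u) * x 0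
      + ∫ s in (0 : ℝ)..t, exp (-∫ u in s..t, p u) * q s := by
  set P : ℝ → ℝ := fun t => ∫ u in (0 : ℝ)..t, p u
  have hP : ∀ t, HasDerivAt P (p t) t := fun t =>
    integral_hasDerivAt_right (hp.intervalIntegrable _ _)
      hp.aestronglyMeasurable.stronglyMeasurableAtFilter hp.continuousAt
  have hPcont : Continuous P := continuous_iff_continuousAt.2 fun t => (hP t).continuousAt
  have hy : ∀ s ∈ Set.uIcc 0 t, HasDerivAt (fun u => x u * exp (P u)) (q s * exp (P s)) s := by
    intro s hs
    rw [Set.uIcc_of_le ht] at hs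
    have h : HasDerivAt (fun u => x u * exp (P u))
        ((-p s * x s + q s) * exp (P s) + x s * (exp (P s) * p s)) s :=
      (hx s hs.1).mul (hP s).exp
    convert h using 1
    ring
  have hftc := integral_eq_sub_of_hasDerivAt hy
    ((hq.mul (continuous_exp.comp hPcont)).intervalIntegrable _ _)
  have hshift : ∀ s, exp (-∫ u in s..t, p u) = exp (-P t) * exp (P s) := fun s => by
    rw [← exp_add, ← integral_interval_sub_left (hp.intervalIntegrable 0 t)
      (hp.intervalIntegrable 0 s), neg_sub, sub_eq_neg_add]
  have hP0 : P 0 = 0 := integral_same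
  simp_rw [hshift, mul_assoc, intervalIntegral.integral_const_mul, mul_comm (exp (P _)) (q _),
    hftc, hP0]
  rw [exp_neg]
  field_simp
  ring

theorem mul_exp_neg_two_mul_le {l : ℝ} (hl : 0 < l) (t : ℝ) :
    t * exp (-(2 * l) * t) ≤ l⁻¹ * exp (-l * t) := by
  have hlin : l * t * exp (-l * t) ≤ 1 := by
    rw [neg_mul, exp_neg, ← div_eq_mul_inv, div_le_one (exp_pos _)]
    linarith [add_one_le_exp (l * t)]
  have hsplit : exp (-(2 * l) * t) = exp (-l * t) * exp (-l * t) := by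
    rw [← exp_add]; ring_nf
  rw [hsplit, ← mul_assoc]
  refine mul_le_mul_of_nonneg_right ?_ (exp_pos _).le
  rw [← one_div, le_div_iff₀ hl]
  linarith

theorem exists_abs_le_exp_of_hasDerivAt_linear {p q x : ℝ → ℝ} {M a K b : ℝ}
    (hp : Continuous p) (hq : Continuous q) (ha : 0 < a) (hb : 0 < b)
    (hp_decay : ∀ s t, 0 ≤ s → s ≤ t → exp (-∫ u in s..t, p u) ≤ M * exp (-a * (t - s)))
    (hq_decay : ∀ s ≥ (0 : ℝ), |q s| ≤ K * exp (-b * s))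
    (hx : ∀ t ≥ (0 : ℝ), HasDerivAt x (-p t * x t + q t) t) :
    ∃ C ≥ (0 : ℝ), ∃ lam > (0 : ℝ), ∀ t ≥ (0 : ℝ), |x t| ≤ C * exp (-lam * t) := by
  set lam := min a b / 2
  have hlam : 0 < lam := by positivity
  have hM : 0 ≤ M := zero_le_one.trans (by simpa using hp_decay 0 0 le_rfl le_rfl)
  have hK : 0 ≤ K := by simpa using (abs_nonneg _).trans (hq_decay 0 le_rfl)
  refine ⟨M * |x 0| + M * K * lam⁻¹, by positivity, lam, hlam, fun t ht => ?_⟩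
  have hrate : 2 * lam = min a b := by ring
  have hconv : ∀ s ∈ Set.uIoc 0 t,
      ‖exp (-∫ u in s..t, p u) * q s‖ ≤ M * K * exp (-(2 * lam) * t) := by
    intro s hs
    rw [Set.uIoc_of_le ht] at hs
    rw [Real.norm_eq_abs, abs_mul, abs_of_pos (exp_pos _)]
    calc exp (-∫ u in s..t, p u) * |q s| ≤ M * exp (-a * (t - s)) * (K * exp (-b * s)) :=
          mul_le_mul (hp_decay s t hs.1.le hs.2) (hq_decay s hs.1.le) (abs_nonneg _)
            (by positivity)
      _ = M * K * exp (-(a * (t - s) + b * s)) := by rw [neg_add, exp_add]; ring_nf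
      _ ≤ M * K * exp (-(2 * lam) * t) := by
          gcongr
          rw [hrate]
          nlinarith [mul_le_mul_of_nonneg_right (min_le_left a b) (sub_nonneg.2 hs.2),
            mul_le_mul_of_nonneg_right (min_le_right a b) hs.1.le]
  rw [eq_exp_neg_integral_mul_add_integral hp hq hx ht]
  calc _ ≤ |exp (-∫ u in (0 : ℝ)..t, p u) * x 0|
        + |∫ s in (0 : ℝ)..t, exp (-∫ u in s..t, p u) * q s| := abs_add_le _ _
    _ ≤ M * exp (-a * t) * |x 0| + M * K * exp (-(2 * lam) * t) * t := by
        gcongr ?_ + ?_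
        · rw [abs_mul, abs_of_pos (exp_pos _)]
          gcongr
          simpa using hp_decay 0 t le_rfl ht
        · simpa [abs_of_nonneg ht] using norm_integral_le_of_norm_le_const hconv
    _ ≤ M * exp (-lam * t) * |x 0| + M * K * (lam⁻¹ * exp (-lam * t)) := by
        rw [mul_assoc (M * K), mul_comm (exp _)]
        refine add_le_add ?_ (mul_le_mul_of_nonneg_left (mul_exp_neg_two_mul_le hlam t) ?_)
        · gcongr
          nlinarith [min_le_left a b]
        · positivity
    _ = (M * |x 0| + M * K * lam⁻¹) * exp (-lam * t) := by ring

theorem tendsto_zero_of_abs_le_mul_exp_neg {x : ℝ → ℝ} {C lam : ℝ} (hlam : 0 < lam)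
    (h : ∀ t ≥ (0 : ℝ), |x t| ≤ C * exp (-lam * t)) : Tendsto x atTop (𝓝 0) := by
  have hexp : Tendsto (fun t => exp (-lam * t)) atTop (𝓝 0) :=
    tendsto_exp_atBot.comp (tendsto_id.const_mul_atTop_of_neg (neg_lt_zero.2 hlam))
  exact squeeze_zero_norm' (eventually_atTop.2 ⟨0, h⟩) (by simpa using hexp.const_mul C)

theorem statement10_general (k : ℝ) (hk : k > 0) (ψ : ℝ → ℝ) (hψ_cont : Continuous ψ)
    (hψ_bdd : ∃ c : ℝ, ∀ t, |ψ t| ≤ c)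
    (T δ₀ : ℝ) (hT : T > 0) (hδ₀ : δ₀ > 0)
    (hPE : ∀ t ≥ (0 : ℝ), δ₀ ≤ ∫ s in t..(t + T), (ψ s) ^ 2)
    (δ : ℝ → ℝ) (hδ_cont : Continuous δ)
    (C₀ lam₀ : ℝ) (hlam₀ : lam₀ > 0)
    (hδ_dec : ∀ t ≥ (0 : ℝ), |δ t| ≤ C₀ * Real.exp (-lam₀ * t))
    (x : ℝ → ℝ)
    (hx : ∀ t ≥ (0 : ℝ), HasDerivAt x (-k * (ψ t) ^ 2 * x t + k * ψ t * δ t) t) :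
    (∃ C ≥ (0 : ℝ), ∃ lam > (0 : ℝ), ∀ t ≥ (0 : ℝ),
      |x t| ≤ C * Real.exp (-lam * t)) ∧
    Filter.Tendsto x Filter.atTop (nhds 0) := by
  obtain ⟨c, hc⟩ := hψ_bdd
  have hgain : Continuous fun s => k * ψ s ^ 2 := continuous_const.mul (hψ_cont.pow 2)
  have hgain_PE : ∀ t ≥ (0 : ℝ), k * δ₀ ≤ ∫ s in t..(t + T), k * ψ s ^ 2 := fun t ht => by
    rw [intervalIntegral.integral_const_mul]
    exact mul_le_mul_of_nonneg_left (hPE t ht) hk.le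
  have hforcing : ∀ s ≥ (0 : ℝ), |k * ψ s * δ s| ≤ k * c * C₀ * exp (-lam₀ * s) := by
    intro s hs
    rw [abs_mul, abs_mul, abs_of_pos hk, mul_assoc (k * c)]
    exact mul_le_mul (mul_le_mul_of_nonneg_left (hc s) hk.le) (hδ_dec s hs) (abs_nonneg _)
      (mul_nonneg hk.le ((abs_nonneg _).trans (hc 0)))
  have hgain_decay : ∀ s t, 0 ≤ s → s ≤ t →
      exp (-∫ u in s..t, k * ψ u ^ 2) ≤ exp (k * δ₀) * exp (-(k * δ₀ / T) * (t - s)) :=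
    fun s t => exp_neg_integral_le_of_le_integral_period (hgain.intervalIntegrable · ·)
      (fun s => by positivity) hT hgain_PE (by positivity)
  obtain ⟨C, hC, lam, hlam, hbound⟩ :=
    exists_abs_le_exp_of_hasDerivAt_linear (q := fun s => k * ψ s * δ s) hgain
      ((continuous_const.mul hψ_cont).mul hδ_cont) (by positivity) hlam₀ hgain_decay hforcing
      (by simpa only [neg_mul] using hx)
  exact ⟨⟨C, hC, lam, hlam, hbound⟩, tendsto_zero_of_abs_le_mul_exp_neg hlam hbound⟩

/-- scalar DREM error dynamics with an exponentially decaying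
perturbation, `x' = -k ψ² x + k ψ δ`, under persistent excitation of `ψ`:
`x` converges to zero exponentially fast. -/
theorem statement10 (k : ℝ) (hk : k > 0) (ψ : ℝ → ℝ) (hψ_cont : Continuous ψ)
    (hψ_bdd : ∃ c : ℝ, ∀ t, |ψ t| ≤ c)
    (T δ₀ : ℝ) (hT : T > 0) (hδ₀ : δ₀ > 0)
    (hPE : ∀ t ≥ (0 : ℝ), δ₀ ≤ ∫ s in t..(t + T), (ψ s) ^ 2)
    (δ : ℝ → ℝ) (hδ_cont : Continuous δ)
    (C₀ lam₀ : ℝ) (hC₀ : C₀ ≥ 0) (hlam₀ : lam₀ > 0)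
    (hδ_dec : ∀ t ≥ (0 : ℝ), |δ t| ≤ C₀ * Real.exp (-lam₀ * t))
    (x : ℝ → ℝ)
    (hx : ∀ t ≥ (0 : ℝ), HasDerivAt x (-k * (ψ t) ^ 2 * x t + k * ψ t * δ t) t) :
    (∃ C ≥ (0 : ℝ), ∃ lam > (0 : ℝ), ∀ t ≥ (0 : ℝ),
      |x t| ≤ C * Real.exp (-lam * t)) ∧
    Filter.Tendsto x Filter.atTop (nhds 0) :=
  statement10_general k hk ψ hψ_cont hψ_bdd T δ₀ hT hδ₀ hPE δ hδ_cont C₀ lam₀ hlam₀ hδ_dec x hx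
end

section
/- (Decomposition of the excitation integral for N = 2.) Let B_1, B_2 > 0, let ω_1, ω_2 > 0 with ω_1 ≠ ω_2, let φ̄_1, φ̄_2 ∈ ℝ and d > 0. Define s_i(t) = B_i sin(ω_i t + φ̄_i), ξ_1(t) = s_1(t) + s_2(t), ξ_3(t) = −(ω_1² s_1(t) + ω_2² s_2(t)), and Φ_e(t) the 2×2 matrix with rows (ξ_3(t), ξ_1(t)) and (ξ_3(t−d), ξ_1(t−d)). Set C_lin = ½ B_1² B_2² (ω_1² − ω_2²)² (1 − cos(d ω_1) cos(d ω_2)). Then the function t ↦ ∫_0^t (det Φ_e(s))² ds − C_lin · t is bounded on [0,∞); in particular (1/t) ∫_0^t (det Φ_e(s))² ds → C_lin as t → ∞. -/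
/-!
In `det Φ_e` the products `sᵢ(t) sᵢ(t - d)` cancel, leaving
`det Φ_e = (ω₁² - ω₂²) (s₂ s₁(· - d) - s₁ s₂(· - d))`. By the product-to-sum formulas this is a sum
of two sinusoids, of frequencies `ω₂ - ω₁` and `ω₁ + ω₂`, with amplitudes
`-B₁B₂(ω₁² - ω₂²) sin p` and `-B₁B₂(ω₁² - ω₂²) sin q`, where `p = d(ω₁ + ω₂)/2`, `q = d(ω₁ - ω₂)/2`.
Its square is the constant `C_lin` plus cosines of the nonzero frequencies `2(ω₂ - ω₁)`,
`2(ω₁ + ω₂)`, `2ω₁`, `2ω₂`, and these have bounded primitives; the constant is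
`(B₁B₂(ω₁² - ω₂²))² (sin² p + sin² q) / 2`, and `sin² p + sin² q = 1 - cos(dω₁) cos(dω₂)`.
-/

open Real Filter Topology intervalIntegral

theorem det_fin_two_of_neg_weighted_sums (a b x y x' y' : ℝ) :
    !![-(a * x + b * y), x + y; -(a * x' + b * y'), x' + y'].det = (a - b) * (y * x' - x * y') := by
  rw [Matrix.det_fin_two_of]
  ring

theorem sin_mul_sin_sub_sub_sin_mul_sin_sub (x y p q : ℝ) :
    sin y * sin (x - (p + q)) - sin x * sin (y - (p - q))
      = -sin p * sin (y - x + q) - sin q * sin (x + y - p) := by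
  simp only [sin_sub, sin_add, cos_sub, cos_add]
  ring

theorem one_sub_cos_add_mul_cos_sub (p q : ℝ) :
    1 - cos (p + q) * cos (p - q) = sin p ^ 2 + sin q ^ 2 := by
  rw [cos_add, cos_sub]
  linear_combination (sin q ^ 2 - 1) * sin_sq_add_cos_sq p - cos p ^ 2 * sin_sq_add_cos_sq q

theorem mul_sin_add_mul_sin_sq (u v x y : ℝ) :
    (u * sin x + v * sin y) ^ 2 = (u ^ 2 + v ^ 2) / 2 - u ^ 2 / 2 * cos (2 * x)
      - v ^ 2 / 2 * cos (2 * y) + u * v * cos (x - y) - u * v * cos (x + y) := by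
  rw [cos_two_mul, cos_two_mul, cos_sub, cos_add]
  linear_combination u ^ 2 * sin_sq_add_cos_sq x + v ^ 2 * sin_sq_add_cos_sq y

def HasMeanWithBoundedRemainder (g : ℝ → ℝ) (c : ℝ) : Prop :=
  ∃ M, ∀ t, |(∫ s in (0 : ℝ)..t, g s) - c * t| ≤ M

namespace HasMeanWithBoundedRemainder

variable {f g : ℝ → ℝ} {a b : ℝ}

theorem const (c : ℝ) : HasMeanWithBoundedRemainder (fun _ => c) c :=
  ⟨0, fun t => by simp [mul_comm]⟩

theorem const_mul_cos (a φ : ℝ) {k : ℝ} (hk : k ≠ 0) :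
    HasMeanWithBoundedRemainder (fun s => a * cos (k * s + φ)) 0 := by
  refine ⟨|a| * 2 / |k|, fun t => ?_⟩
  have hint : ∫ s in (0 : ℝ)..t, a * cos (k * s + φ) = a * (sin (k * t + φ) - sin φ) / k := by
    rw [integral_const_mul, integral_comp_mul_add (fun x => cos x) hk, integral_cos]
    simp only [mul_zero, zero_add, smul_eq_mul]
    field_simp
  have hsin : |sin (k * t + φ) - sin φ| ≤ 2 := by
    rw [abs_le]; constructor <;> linarith [neg_one_le_sin (k * t + φ), sin_le_one (k * t + φ),
      neg_one_le_sin φ, sin_le_one φ]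
  rw [hint, zero_mul, sub_zero, abs_div, abs_mul]
  gcongr

theorem add (hf : HasMeanWithBoundedRemainder f a) (hg : HasMeanWithBoundedRemainder g b)
    (hfc : Continuous f) (hgc : Continuous g) :
    HasMeanWithBoundedRemainder (fun s => f s + g s) (a + b) := by
  obtain ⟨M, hM⟩ := hf
  obtain ⟨N, hN⟩ := hg
  refine ⟨M + N, fun t => ?_⟩
  rw [integral_add (hfc.intervalIntegrable _ _) (hgc.intervalIntegrable _ _)]
  calc _ = |((∫ s in (0 : ℝ)..t, f s) - a * t) + ((∫ s in (0 : ℝ)..t, g s) - b * t)| := by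
        ring_nf
    _ ≤ M + N := (abs_add_le _ _).trans (add_le_add (hM t) (hN t))

theorem tendsto_average (hg : HasMeanWithBoundedRemainder g a) :
    Tendsto (fun t => (1 / t) * ∫ s in (0 : ℝ)..t, g s) atTop (𝓝 a) := by
  obtain ⟨M, hM⟩ := hg
  rw [← tendsto_sub_nhds_zero_iff]
  have hdecay : Tendsto (fun t : ℝ => M * t⁻¹) atTop (𝓝 0) := by
    simpa using tendsto_inv_atTop_zero.const_mul M
  refine squeeze_zero_norm' ?_ hdecay
  filter_upwards [eventually_gt_atTop 0] with t ht
  rw [Real.norm_eq_abs, show (1 / t) * (∫ s in (0 : ℝ)..t, g s) - a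
      = ((∫ s in (0 : ℝ)..t, g s) - a * t) * t⁻¹ by field_simp, abs_mul, abs_inv, abs_of_pos ht]
  exact mul_le_mul_of_nonneg_right (hM t) (inv_nonneg.mpr ht.le)

theorem sq_mul_sin_add_mul_sin (u v α β : ℝ) {k l : ℝ} (hk : k ≠ 0) (hl : l ≠ 0)
    (hsub : k - l ≠ 0) (hadd : k + l ≠ 0) :
    HasMeanWithBoundedRemainder (fun s => (u * sin (k * s + α) + v * sin (l * s + β)) ^ 2)
      ((u ^ 2 + v ^ 2) / 2) := by
  have h := (((((const ((u ^ 2 + v ^ 2) / 2)).add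
    (const_mul_cos (-(u ^ 2 / 2)) (2 * α) (mul_ne_zero two_ne_zero hk))
      (by fun_prop) (by fun_prop)).add
    (const_mul_cos (-(v ^ 2 / 2)) (2 * β) (mul_ne_zero two_ne_zero hl))
      (by fun_prop) (by fun_prop)).add
    (const_mul_cos (u * v) (α - β) hsub) (by fun_prop) (by fun_prop)).add
    (const_mul_cos (-(u * v)) (α + β) hadd) (by fun_prop) (by fun_prop))
  convert h using 1
  · funext s
    rw [mul_sin_add_mul_sin_sq]
    ring_nf
  · ring

end HasMeanWithBoundedRemainder

theorem statement14_general (B₁ B₂ ω₁ ω₂ phb₁ phb₂ d : ℝ)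
    (hω₁ : ω₁ > 0) (hω₂ : ω₂ > 0)
    (hω : ω₁ ≠ ω₂)
    (s₁ s₂ : ℝ → ℝ)
    (hs₁ : ∀ t, s₁ t = B₁ * Real.sin (ω₁ * t + phb₁))
    (hs₂ : ∀ t, s₂ t = B₂ * Real.sin (ω₂ * t + phb₂))
    (ξ₁ ξ₃ : ℝ → ℝ)
    (hξ₁ : ∀ t, ξ₁ t = s₁ t + s₂ t)
    (hξ₃ : ∀ t, ξ₃ t = -(ω₁ ^ 2 * s₁ t + ω₂ ^ 2 * s₂ t))
    (Φe : ℝ → Matrix (Fin 2) (Fin 2) ℝ)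
    (hΦe : ∀ t, Φe t = !![ξ₃ t, ξ₁ t; ξ₃ (t - d), ξ₁ (t - d)])
    (Clin : ℝ)
    (hClin : Clin = 1 / 2 * B₁ ^ 2 * B₂ ^ 2 * (ω₁ ^ 2 - ω₂ ^ 2) ^ 2 *
      (1 - Real.cos (d * ω₁) * Real.cos (d * ω₂))) :
    (∃ M : ℝ, ∀ t ≥ (0 : ℝ),
      |(∫ s in (0 : ℝ)..t, ((Φe s).det) ^ 2) - Clin * t| ≤ M) ∧
    Filter.Tendsto (fun t => (1 / t) * ∫ s in (0 : ℝ)..t, ((Φe s).det) ^ 2)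
      Filter.atTop (nhds Clin) := by
  set p := d * (ω₁ + ω₂) / 2
  set q := d * (ω₁ - ω₂) / 2
  set K := (ω₁ ^ 2 - ω₂ ^ 2) * (B₁ * B₂)
  have hdet : ∀ s, (Φe s).det = -(K * sin p) * sin ((ω₂ - ω₁) * s + (phb₂ - phb₁ + q))
      + -(K * sin q) * sin ((ω₁ + ω₂) * s + (phb₁ + phb₂ - p)) := fun s => by
    rw [hΦe, hξ₁, hξ₁, hξ₃, hξ₃, det_fin_two_of_neg_weighted_sums]
    simp only [hs₁, hs₂]
    have h := sin_mul_sin_sub_sub_sin_mul_sin_sub (ω₁ * s + phb₁) (ω₂ * s + phb₂) p q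
    rw [show ω₁ * s + phb₁ - (p + q) = ω₁ * (s - d) + phb₁ by ring,
      show ω₂ * s + phb₂ - (p - q) = ω₂ * (s - d) + phb₂ by ring,
      show ω₂ * s + phb₂ - (ω₁ * s + phb₁) + q = (ω₂ - ω₁) * s + (phb₂ - phb₁ + q) by ring,
      show ω₁ * s + phb₁ + (ω₂ * s + phb₂) - p = (ω₁ + ω₂) * s + (phb₁ + phb₂ - p) by ring] at h
    linear_combination K * h
  have hmean : HasMeanWithBoundedRemainder (fun s => (Φe s).det ^ 2) Clin := by
    convert HasMeanWithBoundedRemainder.sq_mul_sin_add_mul_sin (-(K * sin p)) (-(K * sin q))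
      (phb₂ - phb₁ + q) (phb₁ + phb₂ - p) (k := ω₂ - ω₁) (l := ω₁ + ω₂)
      (sub_ne_zero.mpr hω.symm) (by positivity)
      (by linarith) (by linarith) using 1
    · simp only [hdet]
    · rw [hClin, show d * ω₁ = p + q by ring, show d * ω₂ = p - q by ring,
        one_sub_cos_add_mul_cos_sub]
      ring
  exact ⟨hmean.imp fun _ hM t _ => hM t, hmean.tendsto_average⟩

/-- decomposition of the excitation integral for `N = 2`:
`∫_0^t (det Φ_e)² ds = C_lin t + bounded`, with
`C_lin = ½ B₁²B₂²(ω₁²-ω₂²)²(1 - cos(dω₁)cos(dω₂))`; in particular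
`(1/t) ∫_0^t (det Φ_e)² ds → C_lin`. -/
theorem statement14 (B₁ B₂ ω₁ ω₂ phb₁ phb₂ d : ℝ)
    (hB₁ : B₁ > 0) (hB₂ : B₂ > 0) (hω₁ : ω₁ > 0) (hω₂ : ω₂ > 0)
    (hω : ω₁ ≠ ω₂) (hd : d > 0)
    (s₁ s₂ : ℝ → ℝ)
    (hs₁ : ∀ t, s₁ t = B₁ * Real.sin (ω₁ * t + phb₁))
    (hs₂ : ∀ t, s₂ t = B₂ * Real.sin (ω₂ * t + phb₂))
    (ξ₁ ξ₃ : ℝ → ℝ)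
    (hξ₁ : ∀ t, ξ₁ t = s₁ t + s₂ t)
    (hξ₃ : ∀ t, ξ₃ t = -(ω₁ ^ 2 * s₁ t + ω₂ ^ 2 * s₂ t))
    (Φe : ℝ → Matrix (Fin 2) (Fin 2) ℝ)
    (hΦe : ∀ t, Φe t = !![ξ₃ t, ξ₁ t; ξ₃ (t - d), ξ₁ (t - d)])
    (Clin : ℝ)
    (hClin : Clin = 1 / 2 * B₁ ^ 2 * B₂ ^ 2 * (ω₁ ^ 2 - ω₂ ^ 2) ^ 2 *
      (1 - Real.cos (d * ω₁) * Real.cos (d * ω₂))) :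
    (∃ M : ℝ, ∀ t ≥ (0 : ℝ),
      |(∫ s in (0 : ℝ)..t, ((Φe s).det) ^ 2) - Clin * t| ≤ M) ∧
    Filter.Tendsto (fun t => (1 / t) * ∫ s in (0 : ℝ)..t, ((Φe s).det) ^ 2)
      Filter.atTop (nhds Clin) :=
  statement14_general B₁ B₂ ω₁ ω₂ phb₁ phb₂ d hω₁ hω₂ hω s₁ s₂ hs₁ hs₂ ξ₁ ξ₃ hξ₁ hξ₃ Φe hΦe Clin
    hClin
end
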